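/- arXiv:1406.3142 — 4 statements merged into one kernel-verified Lean document; each statement's English description precedes it below -/
import Mathlib

section
/- Let Ω ⊂ ℝ² be a bounded open set with area A := vol(Ω) = πR² for some R > 0, and let L := H¹(∂Ω) be the 1-dimensional Hausdorff measure of its boundary, with L > 2πR. Set y² := 1 − 4πA/L², R̃ := L/(2π), r̃ := y·R̃. Assume the Payne–Weinberger inequality holds for Ω, i.e. T(Ω) ≤ (π/2)( r̃⁴·log(r̃/R̃) − (3/4)·r̃⁴ + R̃²·r̃² − R̃⁴/4 ). Then for every α with 0 < α ≤ (2/R)·g(y²) one has T(Ω) + A²/(α·L) ≤ T(B_R) + A²/(α·2πR), where B_R is the disc of radius R centered at the origin. -/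
open MeasureTheory Real

/-- Torsion energy `T(D)`: infimum of `∫_D (|∇V|² − 2V)` over continuously differentiable
functions `V` with compact support contained in the open set `D`. -/
noncomputable def torsionEnergy {n : ℕ} (D : Set (EuclideanSpace ℝ (Fin n))) : ℝ :=
  sInf { E : ℝ | ∃ V : EuclideanSpace ℝ (Fin n) → ℝ, ContDiff ℝ 1 V ∧
    HasCompactSupport V ∧ tsupport V ⊆ D ∧
    E = ∫ x in D, (‖gradient V x‖ ^ 2 - 2 * V x) }

noncomputable def gFun (t : ℝ) : ℝ :=
  (1 - t) ^ 2 / ((1 + Real.sqrt (1 - t)) * (1 + t * Real.log t - t))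


local notation "E2" => EuclideanSpace ℝ (Fin 2)




lemma ibp_radial (V : E2 → ℝ) (hV : ContDiff ℝ 1 V) (hVc : HasCompactSupport V) :
    ∫ x, fderiv ℝ V x x = -(2 * ∫ x, V x) := by
  have hVd : Differentiable ℝ V := hV.differentiable one_ne_zero
  have hfc : Continuous fun x => fderiv ℝ V x := hV.continuous_fderiv one_ne_zero
  have hVint : Integrable V := hV.continuous.integrable_of_hasCompactSupport hVc
  have key : ∀ i : Fin 2,
      ∫ x : E2, x i * fderiv ℝ V x (EuclideanSpace.single i 1) = -∫ x, V x := by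
    intro i
    have hder : HasCompactSupport fun x : E2 => fderiv ℝ V x (EuclideanSpace.single i 1) :=
      hVc.fderiv_apply ℝ _
    have hdercont : Continuous fun x : E2 => fderiv ℝ V x (EuclideanSpace.single i 1) :=
      hfc.clm_apply continuous_const
    have hprojc : Continuous fun x : E2 => x i :=
      (EuclideanSpace.proj i : E2 →L[ℝ] ℝ).continuous
    have h1 : ∫ x : E2, (fun y : E2 => y i) x * fderiv ℝ V x (EuclideanSpace.single i 1)
        = - ∫ x : E2, fderiv ℝ (fun y : E2 => y i) x (EuclideanSpace.single i 1) * V x := by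
      apply integral_mul_fderiv_eq_neg_fderiv_mul_of_integrable
      · have : (fun x : E2 => fderiv ℝ (fun y : E2 => y i) x (EuclideanSpace.single i 1) * V x)
            = fun x => V x := by
          funext x
          have : fderiv ℝ (fun y : E2 => y i) x = (EuclideanSpace.proj i : E2 →L[ℝ] ℝ) :=
            (EuclideanSpace.proj i : E2 →L[ℝ] ℝ).fderiv
          simp [this, PiLp.proj_apply, EuclideanSpace.single_apply]
        rw [this]; exact hVint
      · exact (hprojc.mul hdercont).integrable_of_hasCompactSupport (hder.mul_left)
      · exact (hprojc.mul hV.continuous).integrable_of_hasCompactSupport (hVc.mul_left)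
      · exact fun x _ => (EuclideanSpace.proj i : E2 →L[ℝ] ℝ).differentiable x
      · exact fun x _ => hVd x
    have h2 : (fun x : E2 => fderiv ℝ (fun y : E2 => y i) x (EuclideanSpace.single i 1) * V x)
        = fun x => V x := by
      funext x
      have : fderiv ℝ (fun y : E2 => y i) x = (EuclideanSpace.proj i : E2 →L[ℝ] ℝ) :=
        (EuclideanSpace.proj i : E2 →L[ℝ] ℝ).fderiv
      simp [this, PiLp.proj_apply, EuclideanSpace.single_apply]
    rw [h2] at h1
    exact h1
  have hx : ∀ x : E2, fderiv ℝ V x x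
      = ∑ i : Fin 2, x i * fderiv ℝ V x (EuclideanSpace.single i 1) := by
    intro x
    have hxe : x = ∑ i : Fin 2, x i • EuclideanSpace.single i (1:ℝ) := by
      have := (EuclideanSpace.basisFun (Fin 2) ℝ).sum_repr x
      simpa [EuclideanSpace.basisFun_apply, EuclideanSpace.basisFun_repr] using this.symm
    set L := fderiv ℝ V x with hL
    conv_lhs => rw [hxe]
    rw [map_sum]
    simp [smul_eq_mul]
  calc ∫ x : E2, fderiv ℝ V x x
      = ∫ x : E2, ∑ i : Fin 2, x i * fderiv ℝ V x (EuclideanSpace.single i 1) := by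
        simp_rw [hx]
    _ = ∑ i : Fin 2, ∫ x : E2, x i * fderiv ℝ V x (EuclideanSpace.single i 1) := by
        apply integral_finset_sum
        intro i _
        exact (((EuclideanSpace.proj i : E2 →L[ℝ] ℝ).continuous).mul
          (hfc.clm_apply continuous_const)).integrable_of_hasCompactSupport
          ((hVc.fderiv_apply ℝ _).mul_left)
    _ = ∑ _i : Fin 2, (-∫ x, V x) := by simp_rw [key]
    _ = -(2 * ∫ x, V x) := by simp [Fin.sum_univ_two, two_mul]

lemma integral_ball_normsq (R : ℝ) (hR : 0 < R) :
    ∫ x in Metric.ball (0 : E2) R, ‖x‖ ^ 2 = π * R ^ 4 / 2 := by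
  have hvol : (volume (Metric.ball (0 : E2) 1)).toReal = π := by
    rw [EuclideanSpace.volume_ball, Fintype.card_fin]
    have hg : ((2 : ℕ) : ℝ) / 2 + 1 = 2 := by norm_num
    rw [hg, Real.Gamma_two, Real.sq_sqrt Real.pi_pos.le]
    simp [ENNReal.toReal_ofReal Real.pi_pos.le]
  have hind : (Metric.ball (0 : E2) R).indicator (fun x => ‖x‖ ^ 2)
      = fun x : E2 => (fun r : ℝ => if r < R then r ^ 2 else 0) ‖x‖ := by
    funext x
    by_cases hx : ‖x‖ < R <;> simp [Set.indicator_apply, mem_ball_zero_iff, hx]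
  have h1 : ∫ x in Metric.ball (0 : E2) R, ‖x‖ ^ 2
      = ∫ x : E2, (fun r : ℝ => if r < R then r ^ 2 else 0) ‖x‖ := by
    rw [← integral_indicator measurableSet_ball, hind]
  rw [h1, integral_fun_norm_addHaar volume (fun r : ℝ => if r < R then r ^ 2 else 0)]
  have hdim : Module.finrank ℝ E2 = 2 := finrank_euclideanSpace_fin
  rw [hdim, measureReal_def, hvol]
  have h3 : (fun y : ℝ => y ^ (2 - 1) • (if y < R then y ^ 2 else 0 : ℝ))
      = fun y : ℝ => (Set.Iio R).indicator (fun y => y ^ 3) y := by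
    funext y
    simp only [pow_one, smul_eq_mul, Set.indicator_apply, Set.mem_Iio]
    split_ifs <;> ring
  rw [h3]
  rw [integral_indicator measurableSet_Iio, Measure.restrict_restrict measurableSet_Iio]
  have h4 : Set.Iio R ∩ Set.Ioi 0 = Set.Ioo 0 R := by
    ext z; simp [Set.mem_Ioo, and_comm]
  rw [h4]
  have h5 : ∫ y in Set.Ioo (0:ℝ) R, y ^ 3 = R ^ 4 / 4 := by
    rw [← integral_Ioc_eq_integral_Ioo, ← intervalIntegral.integral_of_le hR.le,
      integral_pow]
    norm_num
  rw [h5]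
  simp only [nsmul_eq_mul, smul_eq_mul]
  ring

lemma ball_torsion_lb (R : ℝ) (hR : 0 < R) :
    -(π * R ^ 4 / 8) ≤ torsionEnergy (Metric.ball (0 : E2) R) := by
  apply le_csInf
  · refine ⟨0, (fun _ => 0), contDiff_const, ?_, ?_, ?_⟩
    · rw [HasCompactSupport]
      have : tsupport (fun _ : E2 => (0:ℝ)) = ∅ := by
        simp [tsupport, Function.support_fun_zero]
      rw [this]; exact isCompact_empty
    · have : tsupport (fun _ : E2 => (0:ℝ)) = ∅ := by
        simp [tsupport, Function.support_fun_zero]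
      rw [this]; exact Set.empty_subset _
    · have hgrad : ∀ x : E2, gradient (fun _ : E2 => (0:ℝ)) x = 0 := by
        intro x
        simp [gradient, fderiv_fun_const]
      simp [hgrad]
  · rintro e ⟨V, hV, hVc, hVs, rfl⟩
    set B := Metric.ball (0 : E2) R with hB
    have hVd : Differentiable ℝ V := hV.differentiable one_ne_zero
    have hfc : Continuous fun x => fderiv ℝ V x := hV.continuous_fderiv one_ne_zero
    have hgradeq : (fun x : E2 => gradient V x)
        = fun x => (InnerProductSpace.toDual ℝ E2).symm (fderiv ℝ V x) := rfl
    have hgradc : Continuous fun x : E2 => gradient V x := by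
      rw [hgradeq]
      exact (InnerProductSpace.toDual ℝ E2).symm.continuous.comp hfc
    -- integrability on the ball
    have hIball : ∀ f : E2 → ℝ, Continuous f → IntegrableOn f B := by
      intro f hf
      exact (hf.continuousOn.integrableOn_compact
        (isCompact_closedBall (0:E2) R)).mono_set Metric.ball_subset_closedBall
    have hcont1 : Continuous fun x : E2 => ‖gradient V x‖ ^ 2 - 2 * V x :=
      ((hgradc.norm.pow 2).sub (continuous_const.mul hV.continuous))
    have hcontD : Continuous fun x : E2 => fderiv ℝ V x x := hfc.clm_apply continuous_id
    have hcont2 : Continuous fun x : E2 => -(fderiv ℝ V x x) - ‖x‖ ^ 2 / 4 - 2 * V x :=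
      ((hcontD.neg.sub ((continuous_norm.pow 2).div_const 4)).sub
        (continuous_const.mul hV.continuous))
    -- pointwise inequality
    have hpt : ∀ x : E2, -(fderiv ℝ V x x) - ‖x‖ ^ 2 / 4 - 2 * V x
        ≤ ‖gradient V x‖ ^ 2 - 2 * V x := by
      intro x
      have h0 : (0:ℝ) ≤ ‖gradient V x - (-(2⁻¹:ℝ)) • x‖ ^ 2 := sq_nonneg _
      have hexp : ‖gradient V x - (-(2⁻¹:ℝ)) • x‖ ^ 2
          = ‖gradient V x‖ ^ 2 - 2 * inner ℝ (gradient V x) ((-(2⁻¹:ℝ)) • x) + ‖(-(2⁻¹:ℝ)) • x‖ ^ 2 :=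
        norm_sub_sq_real _ _
      have hip : (inner ℝ (gradient V x) x : ℝ) = fderiv ℝ V x x := by
        simp [gradient, InnerProductSpace.toDual_symm_apply]
      have hip2 : (inner ℝ (gradient V x) ((-(2⁻¹:ℝ)) • x) : ℝ) = -(2⁻¹) * fderiv ℝ V x x := by
        rw [real_inner_smul_right, hip]
      have hns : ‖(-(2⁻¹:ℝ)) • x‖ ^ 2 = ‖x‖ ^ 2 / 4 := by
        rw [norm_smul]
        simp [mul_pow]
        ring
      rw [hexp, hip2, hns] at h0
      nlinarith [h0]
    -- integral inequality
    have hmono : ∫ x in B, (-(fderiv ℝ V x x) - ‖x‖ ^ 2 / 4 - 2 * V x)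
        ≤ ∫ x in B, (‖gradient V x‖ ^ 2 - 2 * V x) :=
      setIntegral_mono_on (hIball _ hcont2) (hIball _ hcont1) measurableSet_ball
        (fun x _ => hpt x)
    -- compute the left integral
    have hsplit : ∫ x in B, (-(fderiv ℝ V x x) - ‖x‖ ^ 2 / 4 - 2 * V x)
        = (∫ x in B, -(fderiv ℝ V x x)) - (∫ x in B, ‖x‖ ^ 2 / 4) - ∫ x in B, 2 * V x := by
      rw [integral_sub (hIball (fun x => -(fderiv ℝ V x x) - ‖x‖ ^ 2 / 4) (hcontD.neg.sub ((continuous_norm.pow 2).div_const 4)))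
        (hIball (fun x => 2 * V x) (continuous_const.mul hV.continuous)),
        integral_sub (hIball (fun x => -(fderiv ℝ V x x)) hcontD.neg) (hIball (fun x => ‖x‖ ^ 2 / 4) ((continuous_norm.pow 2).div_const 4))]
    have hD : ∫ x in B, fderiv ℝ V x x = -(2 * ∫ x, V x) := by
      rw [setIntegral_eq_integral_of_forall_compl_eq_zero (fun x hx => ?_), ibp_radial V hV hVc]
      have hxn : x ∉ tsupport V := fun hmem => hx (hVs hmem)
      rw [fderiv_of_notMem_tsupport ℝ hxn]
      rfl
    have hVB : ∫ x in B, V x = ∫ x, V x := by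
      apply setIntegral_eq_integral_of_forall_compl_eq_zero
      intro x hx
      exact image_eq_zero_of_notMem_tsupport (fun hmem => hx (hVs hmem))
    have hnormint : ∫ x in B, ‖x‖ ^ 2 / 4 = π * R ^ 4 / 8 := by
      rw [integral_div, integral_ball_normsq R hR]
      ring
    have hleft : ∫ x in B, (-(fderiv ℝ V x x) - ‖x‖ ^ 2 / 4 - 2 * V x) = -(π * R ^ 4 / 8) := by
      rw [hsplit, integral_neg, hD, hnormint, integral_const_mul, hVB]
      ring
    rw [hleft] at hmono
    exact hmono

set_option maxHeartbeats 1000000 in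
theorem payne_weinberger_isoperimetric
    (R : ℝ) (hR : 0 < R) (Ω : Set (EuclideanSpace ℝ (Fin 2)))
    (hΩo : IsOpen Ω) (hΩb : Bornology.IsBounded Ω)
    (A L : ℝ) (hA : A = (volume Ω).toReal) (hAR : A = π * R ^ 2)
    (hL : L = (μH[1] (frontier Ω)).toReal) (hL2 : 2 * π * R < L)
    (y R' r' : ℝ) (hy : y = Real.sqrt (1 - 4 * π * A / L ^ 2))
    (hR' : R' = L / (2 * π)) (hr' : r' = y * R')
    (hPW : torsionEnergy Ω ≤
      (π / 2) * (r' ^ 4 * Real.log (r' / R') - (3 / 4) * r' ^ 4 + R' ^ 2 * r' ^ 2 - R' ^ 4 / 4)) :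
    ∀ α : ℝ, 0 < α → α ≤ (2 / R) * gFun (y ^ 2) →
      torsionEnergy Ω + A ^ 2 / (α * L) ≤
        torsionEnergy (Metric.ball (0 : EuclideanSpace ℝ (Fin 2)) R) +
          A ^ 2 / (α * (2 * π * R)) := by
  intro α hα0 hα
  have hπ : (0:ℝ) < π := Real.pi_pos
  have hL0 : 0 < L := lt_trans (by positivity) hL2
  have hR'pos : 0 < R' := by rw [hR']; positivity
  have hRR' : R < R' := by
    rw [hR', lt_div_iff₀ (by positivity : (0:ℝ) < 2 * π)]
    linarith
  set σ : ℝ := R / R' with hσ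
  have hσ0 : 0 < σ := div_pos hR hR'pos
  have hσ1 : σ < 1 := (div_lt_one hR'pos).2 hRR'
  have hRσ : R = σ * R' := by rw [hσ]; field_simp
  have hLR' : L = 2 * π * R' := by rw [hR']; field_simp
  set t : ℝ := 1 - σ ^ 2 with ht
  have ht0 : 0 < t := by rw [ht]; nlinarith
  have ht1 : t < 1 := by rw [ht]; nlinarith
  have hyt : y = Real.sqrt t := by
    rw [hy, ht]
    congr 1
    rw [hAR, hLR', hRσ]
    field_simp
    ring
  have hy2 : y ^ 2 = t := by rw [hyt, Real.sq_sqrt ht0.le]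
  have hy0 : 0 < y := by rw [hyt]; exact Real.sqrt_pos.2 ht0
  have hlogr : Real.log (r' / R') = Real.log t / 2 := by
    have h1 : r' / R' = y := by rw [hr']; field_simp
    rw [h1, hyt, Real.log_sqrt ht0.le]
  have hh0 : 0 < 1 + t * Real.log t - t := by
    have h1 : Real.log t⁻¹ < t⁻¹ - 1 := by
      apply Real.log_lt_sub_one_of_pos (by positivity)
      intro hcon
      rw [inv_eq_one] at hcon
      exact (ne_of_lt ht1) hcon
    rw [Real.log_inv] at h1
    have h2 := mul_lt_mul_of_pos_left h1 ht0
    have h3 : t * t⁻¹ = 1 := mul_inv_cancel₀ ht0.ne'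
    nlinarith [h2, h3]
  have h1t : 1 - t = σ ^ 2 := by rw [ht]; ring
  have hgf : gFun (y ^ 2) = σ ^ 4 / ((1 + σ) * (1 + t * Real.log t - t)) := by
    rw [hy2]
    unfold gFun
    rw [h1t, Real.sqrt_sq hσ0.le]
    ring_nf
  have hkey : α * (R' * ((1 + σ) * (1 + t * Real.log t - t))) ≤ 2 * σ ^ 3 := by
    have hpos : (0:ℝ) < R' * ((1 + σ) * (1 + t * Real.log t - t)) := by positivity
    calc α * (R' * ((1 + σ) * (1 + t * Real.log t - t)))
        ≤ 2 / R * gFun (y ^ 2) * (R' * ((1 + σ) * (1 + t * Real.log t - t))) :=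
          mul_le_mul_of_nonneg_right hα hpos.le
      _ = 2 * σ ^ 3 := by
          rw [hgf, hRσ]
          field_simp
  have hclaim3 : π * R' ^ 4 * t / 4 * (1 + t * Real.log t - t)
      ≤ π * σ ^ 3 * R' ^ 3 * (1 - σ) / (2 * α) := by
    rw [le_div_iff₀ (by positivity : (0:ℝ) < 2 * α)]
    have ht' : t = (1 - σ) * (1 + σ) := by rw [ht]; ring
    calc π * R' ^ 4 * t / 4 * (1 + t * Real.log t - t) * (2 * α)
        = (π * R' ^ 3 * (1 - σ) / 2) * (α * (R' * ((1 + σ) * (1 + t * Real.log t - t)))) := by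
          rw [ht']; ring
      _ ≤ (π * R' ^ 3 * (1 - σ) / 2) * (2 * σ ^ 3) := by
          apply mul_le_mul_of_nonneg_left hkey
          nlinarith [mul_pos hπ (pow_pos hR'pos 3)]
      _ = π * σ ^ 3 * R' ^ 3 * (1 - σ) := by ring
  have hr'2 : r' ^ 2 = t * R' ^ 2 := by
    have : r' ^ 2 = y ^ 2 * R' ^ 2 := by rw [hr']; ring
    rw [this, hy2]
  have hr'4 : r' ^ 4 = t ^ 2 * R' ^ 4 := by
    have : r' ^ 4 = (y ^ 2) ^ 2 * R' ^ 4 := by rw [hr']; ring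
    rw [this, hy2]
  have hR4 : R ^ 4 = (1 - t) ^ 2 * R' ^ 4 := by
    rw [hRσ, h1t]; ring
  have hclaim2 : (π / 2) * (r' ^ 4 * Real.log (r' / R') - (3 / 4) * r' ^ 4
        + R' ^ 2 * r' ^ 2 - R' ^ 4 / 4) + π * R ^ 4 / 8
      = π * R' ^ 4 * t / 4 * (1 + t * Real.log t - t) := by
    rw [hlogr, hr'4, hr'2, hR4]
    ring
  have hclaim1 : A ^ 2 / (α * (2 * π * R)) - A ^ 2 / (α * L)
      = π * σ ^ 3 * R' ^ 3 * (1 - σ) / (2 * α) := by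
    rw [hAR, hRσ, hLR']
    field_simp
  have hball := ball_torsion_lb R hR
  linarith [hPW, hball, hclaim1, hclaim2, hclaim3]
end

section
/- The function g(t) := (1−t)² / ((1+√(1−t))·(1 + t·log t − t)) is monotone increasing on the interval (0,1). -/
open Real Set

private lemma log_cubic_bound {x : ℝ} (h0 : 0 ≤ x) (h1 : x < 1) :
    x + x ^ 2 / 2 + x ^ 3 / 3 ≤ -Real.log (1 - x) := by
  set f : ℝ → ℝ := fun y => -Real.log (1 - y) - (y + y ^ 2 / 2 + y ^ 3 / 3) with hf
  have hder : ∀ y ∈ Set.Ico (0 : ℝ) 1,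
      HasDerivAt f (1 / (1 - y) - (1 + y + y ^ 2)) y := by
    intro y hy
    have hy1 : (1 : ℝ) - y ≠ 0 := by have := hy.2; intro h; linarith [hy.2, (by linarith : (1:ℝ) - y > 0)]
    have h1 : HasDerivAt (fun y : ℝ => 1 - y) (-1) y := by
      simpa using (hasDerivAt_id y).const_sub 1
    have hlog : HasDerivAt (fun y : ℝ => Real.log (1 - y)) (1 / (1 - y) * (-1)) y := by
      exact ((Real.hasDerivAt_log hy1).comp y h1).congr_deriv (by rw [one_div])
    have hp : HasDerivAt (fun y : ℝ => y + y ^ 2 / 2 + y ^ 3 / 3) (1 + y + y ^ 2) y := by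
      have := ((hasDerivAt_id y).add ((hasDerivAt_pow 2 y).div_const 2)).add
        ((hasDerivAt_pow 3 y).div_const 3)
      exact this.congr_deriv (by push_cast; ring)
    exact (hlog.neg.sub hp).congr_deriv (by ring)
  have hmono : MonotoneOn f (Set.Icc 0 x) := by
    apply monotoneOn_of_deriv_nonneg (convex_Icc 0 x)
    · intro y hy
      exact (hder y ⟨hy.1, lt_of_le_of_lt hy.2 h1⟩).continuousAt.continuousWithinAt
    · intro y hy
      have hy' : y ∈ Set.Ico (0 : ℝ) 1 := by
        rcases (Set.mem_of_mem_of_subset hy interior_subset) with ⟨a, b⟩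
        exact ⟨a, lt_of_le_of_lt b h1⟩
      exact (hder y hy').differentiableAt.differentiableWithinAt
    · intro y hy
      rw [interior_Icc] at hy
      have hy1 : y < 1 := lt_trans hy.2 h1
      rw [(hder y ⟨hy.1.le, hy1⟩).deriv]
      have h1y : (0 : ℝ) < 1 - y := by linarith
      rw [sub_nonneg, le_div_iff₀ h1y]
      nlinarith [hy.1, pow_pos hy.1 3]
  have := hmono (Set.left_mem_Icc.mpr h0) (Set.right_mem_Icc.mpr h0) h0
  simp only [hf] at this
  simp only [sub_zero, Real.log_one] at this
  nlinarith [this]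

private lemma key_ineq {s : ℝ} (h0 : 0 < s) (h1 : s < 1) :
    s ^ 2 * (4 + 3 * s) < (-Real.log (1 - s ^ 2)) * (4 + 3 * s - 2 * s ^ 2 - s ^ 3) := by
  have hx0 : (0 : ℝ) ≤ s ^ 2 := sq_nonneg s
  have hx1 : s ^ 2 < 1 := by nlinarith
  have hlog := log_cubic_bound hx0 hx1
  have hC : (0 : ℝ) < 4 + 3 * s - 2 * s ^ 2 - s ^ 3 := by nlinarith
  have hpoly : s ^ 2 * (4 + 3 * s) <
      (s ^ 2 + (s ^ 2) ^ 2 / 2 + (s ^ 2) ^ 3 / 3) * (4 + 3 * s - 2 * s ^ 2 - s ^ 3) := by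
    have heq : (s ^ 2 + (s ^ 2) ^ 2 / 2 + (s ^ 2) ^ 3 / 3) * (4 + 3 * s - 2 * s ^ 2 - s ^ 3)
        - s ^ 2 * (4 + 3 * s)
        = s ^ 5 * (1 / 2 + s / 3 + s ^ 2 / 2 - 2 * s ^ 3 / 3 - s ^ 4 / 3) := by ring
    have h2 : s ^ 3 ≤ s ^ 2 := by nlinarith
    have h3 : s ^ 4 ≤ s ^ 2 := by nlinarith
    have hp : 0 < 1 / 2 + s / 3 + s ^ 2 / 2 - 2 * s ^ 3 / 3 - s ^ 4 / 3 := by nlinarith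
    linarith [mul_pos (pow_pos h0 5) hp]
  calc s ^ 2 * (4 + 3 * s)
      < (s ^ 2 + (s ^ 2) ^ 2 / 2 + (s ^ 2) ^ 3 / 3) * (4 + 3 * s - 2 * s ^ 2 - s ^ 3) := hpoly
    _ ≤ (-Real.log (1 - s ^ 2)) * (4 + 3 * s - 2 * s ^ 2 - s ^ 3) :=
        mul_le_mul_of_nonneg_right hlog hC.le

private lemma B_pos {t : ℝ} (ht0 : 0 < t) (ht1 : t < 1) : 0 < 1 + t * Real.log t - t := by
  have h := Real.log_lt_sub_one_of_pos (x := t⁻¹) (by positivity) (by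
    intro h
    rw [inv_eq_one] at h
    exact (ne_of_lt ht1) h)
  rw [Real.log_inv] at h
  have := mul_lt_mul_of_pos_left h ht0
  rw [mul_sub, mul_inv_cancel₀ ht0.ne'] at this
  nlinarith

private lemma gFun_hasDeriv {t : ℝ} (ht : t ∈ Set.Ioo (0 : ℝ) 1) :
    HasDerivAt gFun
      ((2 * (1 - t) ^ 1 * (-1) * ((1 + Real.sqrt (1 - t)) * (1 + t * Real.log t - t)) -
        (1 - t) ^ 2 * (1 / (2 * Real.sqrt (1 - t)) * (-1) * (1 + t * Real.log t - t) +
          (1 + Real.sqrt (1 - t)) * Real.log t)) /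
        ((1 + Real.sqrt (1 - t)) * (1 + t * Real.log t - t)) ^ 2) t := by
  obtain ⟨ht0, ht1⟩ := ht
  have h1t : (0 : ℝ) < 1 - t := by linarith
  have h1 : HasDerivAt (fun t : ℝ => 1 - t) (-1) t := by
    simpa using (hasDerivAt_id t).const_sub 1
  have hsqrt : HasDerivAt (fun t : ℝ => Real.sqrt (1 - t))
      (1 / (2 * Real.sqrt (1 - t)) * (-1)) t :=
    (Real.hasDerivAt_sqrt h1t.ne').comp t h1
  have hB : HasDerivAt (fun t : ℝ => 1 + t * Real.log t - t) (Real.log t) t := by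
    have hmul : HasDerivAt (fun t : ℝ => t * Real.log t) (1 * Real.log t + t * t⁻¹) t :=
      (hasDerivAt_id t).mul (Real.hasDerivAt_log ht0.ne')
    exact ((hmul.const_add 1).sub (hasDerivAt_id t)).congr_deriv (by rw [mul_inv_cancel₀ ht0.ne']; ring)
  have hD : HasDerivAt
      (fun t : ℝ => (1 + Real.sqrt (1 - t)) * (1 + t * Real.log t - t))
      (1 / (2 * Real.sqrt (1 - t)) * (-1) * (1 + t * Real.log t - t) +
        (1 + Real.sqrt (1 - t)) * Real.log t) t :=
    (hsqrt.const_add 1).mul hB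
  have hN : HasDerivAt (fun t : ℝ => (1 - t) ^ 2) (2 * (1 - t) ^ 1 * (-1)) t := by
    have := h1.pow 2
    exact this.congr_deriv (by norm_num)
  have hD0 : (1 + Real.sqrt (1 - t)) * (1 + t * Real.log t - t) ≠ 0 := by
    have hs : 0 < Real.sqrt (1 - t) := Real.sqrt_pos.mpr h1t
    have hb := B_pos ht0 ht1
    positivity
  unfold gFun
  exact hN.div hD hD0

private lemma gFun_deriv_pos {t : ℝ} (ht : t ∈ Set.Ioo (0 : ℝ) 1) :
    0 < (2 * (1 - t) ^ 1 * (-1) * ((1 + Real.sqrt (1 - t)) * (1 + t * Real.log t - t)) -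
        (1 - t) ^ 2 * (1 / (2 * Real.sqrt (1 - t)) * (-1) * (1 + t * Real.log t - t) +
          (1 + Real.sqrt (1 - t)) * Real.log t)) /
        ((1 + Real.sqrt (1 - t)) * (1 + t * Real.log t - t)) ^ 2 := by
  obtain ⟨ht0, ht1⟩ := ht
  have h1t : (0 : ℝ) < 1 - t := by linarith
  set s : ℝ := Real.sqrt (1 - t) with hs_def
  have hs0 : 0 < s := Real.sqrt_pos.mpr h1t
  have hs2 : s ^ 2 = 1 - t := Real.sq_sqrt h1t.le
  have hs1 : s < 1 := by
    nlinarith [hs2]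
  have hb := B_pos ht0 ht1
  apply div_pos
  · have ht' : t = 1 - s ^ 2 := by linarith
    set l : ℝ := Real.log t with hl
    have hkey := key_ineq hs0 hs1
    rw [← ht'] at hkey
    rw [← hl] at hkey
    have hident : 2 * (1 - t) ^ 1 * (-1) * ((1 + s) * (1 + t * l - t)) -
        (1 - t) ^ 2 * (1 / (2 * s) * (-1) * (1 + t * l - t) + (1 + s) * l) =
        s ^ 2 / 2 * ((-l) * (4 + 3 * s - 2 * s ^ 2 - s ^ 3) - s ^ 2 * (4 + 3 * s)) := by
      rw [ht']
      field_simp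
      ring
    rw [hident]
    have : 0 < (-l) * (4 + 3 * s - 2 * s ^ 2 - s ^ 3) - s ^ 2 * (4 + 3 * s) := by
      linarith [hkey]
    positivity
  · have : 0 < (1 + s) * (1 + t * Real.log t - t) := by positivity
    positivity

theorem gFun_strictMonoOn : StrictMonoOn gFun (Set.Ioo (0 : ℝ) 1) := by
  apply strictMonoOn_of_deriv_pos (convex_Ioo 0 1)
  · intro t ht
    exact (gFun_hasDeriv ht).continuousAt.continuousWithinAt
  · intro t ht
    rw [interior_Ioo] at ht
    rw [(gFun_hasDeriv ht).deriv]
    exact gFun_deriv_pos ht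
end

section
/- For the function g(t) := (1−t)² / ((1+√(1−t))·(1 + t·log t − t)) on (0,1) the following hold: (a) 1 + t·log t − t > 0 for all t ∈ (0,1); (b) g(t) → 2 as t → 1⁻; (c) g(t) → 1/2 as t → 0⁺; (d) g(t) > 1/2 for all t ∈ (0,1). -/
open Filter Topology

-- (a)
lemma aux_pos : ∀ t ∈ Set.Ioo (0 : ℝ) 1, 0 < 1 + t * Real.log t - t := by
  intro t ht
  obtain ⟨ht0, ht1⟩ := ht
  have h : Real.log t⁻¹ < t⁻¹ - 1 :=
    Real.log_lt_sub_one_of_pos (inv_pos.2 ht0) (by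
      intro h; rw [inv_eq_one] at h; exact absurd h ht1.ne)
  rw [Real.log_inv] at h
  have h2 := mul_lt_mul_of_pos_left h ht0
  have h3 : t * t⁻¹ = 1 := mul_inv_cancel₀ ht0.ne'
  nlinarith

-- D < (1-t)^2 on (0,1)
lemma aux_lt (t : ℝ) (ht : t ∈ Set.Ioo (0 : ℝ) 1) :
    1 + t * Real.log t - t < (1 - t) ^ 2 := by
  obtain ⟨ht0, ht1⟩ := ht
  have h : Real.log t < t - 1 := Real.log_lt_sub_one_of_pos ht0 ht1.ne
  have h2 := mul_lt_mul_of_pos_left h ht0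
  nlinarith

theorem gFun_properties :
    (∀ t ∈ Set.Ioo (0 : ℝ) 1, 0 < 1 + t * Real.log t - t) ∧
    Tendsto gFun (𝓝[<] (1 : ℝ)) (𝓝 2) ∧
    Tendsto gFun (𝓝[>] (0 : ℝ)) (𝓝 (1 / 2)) ∧
    (∀ t ∈ Set.Ioo (0 : ℝ) 1, 1 / 2 < gFun t) := by
  refine ⟨aux_pos, ?_, ?_, ?_⟩
  · -- limit at 1⁻
    have hIoo : Set.Ioo (0 : ℝ) 1 ∈ 𝓝[<] (1 : ℝ) :=
      Ioo_mem_nhdsLT_of_mem (by constructor <;> norm_num)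
    -- second-level L'Hôpital: (2t-2)/log t → 2
    have hlim2 : Tendsto (fun t : ℝ => (2 * t - 2) / Real.log t) (𝓝[<] (1 : ℝ)) (𝓝 2) := by
      apply HasDerivAt.lhopital_zero_nhdsLT (f' := fun _ => (2 : ℝ)) (g' := fun t => t⁻¹)
      · exact Eventually.of_forall fun t => by
          simpa using ((hasDerivAt_id t).const_mul 2).sub_const 2
      · filter_upwards [hIoo] with t ht
        exact Real.hasDerivAt_log ht.1.ne'
      · filter_upwards [hIoo] with t ht
        exact inv_ne_zero ht.1.ne'
      · have hc : Continuous fun t : ℝ => 2 * t - 2 := by continuity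
        have : Tendsto (fun t : ℝ => 2 * t - 2) (𝓝 1) (𝓝 0) := by simpa using hc.tendsto 1
        exact this.mono_left nhdsWithin_le_nhds
      · have : Tendsto Real.log (𝓝 1) (𝓝 0) := by
          simpa using (Real.continuousAt_log one_ne_zero).tendsto
        exact this.mono_left nhdsWithin_le_nhds
      · have hc : Continuous fun t : ℝ => 2 * t := by continuity
        have : Tendsto (fun t : ℝ => 2 * t) (𝓝[<] (1 : ℝ)) (𝓝 2) := by
          simpa using (hc.tendsto 1).mono_left nhdsWithin_le_nhds
        refine this.congr fun t => ?_
        rw [div_eq_mul_inv, inv_inv]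
    -- first-level L'Hôpital: (1-t)^2 / D → 2
    have hlim1 : Tendsto (fun t : ℝ => (1 - t) ^ 2 / (1 + t * Real.log t - t))
        (𝓝[<] (1 : ℝ)) (𝓝 2) := by
      apply HasDerivAt.lhopital_zero_nhdsLT (f' := fun t => 2 * t - 2)
        (g' := fun t => Real.log t)
      · exact Eventually.of_forall fun t => by
          have h := ((hasDerivAt_id t).const_sub 1).pow 2
          convert h using 1
          · rfl
          · rfl
          · rfl
          · simp only [id_eq]; ring
      · filter_upwards [hIoo] with t ht
        have h := ((Real.hasDerivAt_mul_log ht.1.ne').const_add 1).sub (hasDerivAt_id t)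
        convert h using 1
        · rfl
        · rfl
        · rfl
        · ring
      · filter_upwards [hIoo] with t ht
        exact ne_of_lt (Real.log_neg ht.1 ht.2)
      · have hc : Continuous fun t : ℝ => (1 - t) ^ 2 :=
          (continuous_const.sub continuous_id).pow 2
        have : Tendsto (fun t : ℝ => (1 - t) ^ 2) (𝓝 1) (𝓝 0) := by
          simpa using hc.tendsto 1
        exact this.mono_left nhdsWithin_le_nhds
      · have hc : Continuous fun t : ℝ => 1 + t * Real.log t - t :=
          (continuous_const.add Real.continuous_mul_log).sub continuous_id
        have : Tendsto (fun t : ℝ => 1 + t * Real.log t - t) (𝓝 1) (𝓝 0) := by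
          simpa using hc.tendsto 1
        exact this.mono_left nhdsWithin_le_nhds
      · exact hlim2
    -- first factor → 1
    have hfac : Tendsto (fun t : ℝ => 1 / (1 + Real.sqrt (1 - t))) (𝓝[<] (1 : ℝ)) (𝓝 1) := by
      have hc0 : Continuous fun t : ℝ => 1 + Real.sqrt (1 - t) :=
        continuous_const.add (Real.continuous_sqrt.comp (continuous_const.sub continuous_id))
      have hc : Tendsto (fun t : ℝ => 1 + Real.sqrt (1 - t)) (𝓝 1) (𝓝 1) := by
        simpa using hc0.tendsto 1
      have hd : Tendsto (fun t : ℝ => 1 / (1 + Real.sqrt (1 - t))) (𝓝 1) (𝓝 (1 / 1)) :=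
        Tendsto.div tendsto_const_nhds hc one_ne_zero
      simpa using hd.mono_left nhdsWithin_le_nhds
    have := hfac.mul hlim1
    rw [one_mul] at this
    refine this.congr fun t => ?_
    rw [div_mul_div_comm, one_mul, gFun]
  · -- limit at 0⁺
    have hc : ContinuousAt gFun 0 := by
      apply ContinuousAt.div
      · exact ((continuous_const.sub continuous_id).pow 2).continuousAt
      · exact ((continuous_const.add
          (Real.continuous_sqrt.comp (continuous_const.sub continuous_id))).mul
          ((continuous_const.add Real.continuous_mul_log).sub continuous_id)).continuousAt
      · norm_num [Real.sqrt_one]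
    have h2 : Tendsto gFun (𝓝[>] (0 : ℝ)) (𝓝 (gFun 0)) :=
      hc.tendsto.mono_left nhdsWithin_le_nhds
    have hval : gFun 0 = 1 / 2 := by
      simp [gFun, Real.sqrt_one]
      norm_num
    rwa [hval] at h2
  · -- g > 1/2
    intro t ht
    have hD := aux_pos t ht
    have hDlt := aux_lt t ht
    have hs0 : (0 : ℝ) ≤ Real.sqrt (1 - t) := Real.sqrt_nonneg _
    have hs1 : Real.sqrt (1 - t) < 1 := by
      nlinarith [Real.sq_sqrt (by linarith [ht.2] : (0:ℝ) ≤ 1 - t), Real.sqrt_nonneg (1 - t),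
        ht.1]
    have hB : 0 < (1 + Real.sqrt (1 - t)) * (1 + t * Real.log t - t) :=
      mul_pos (by linarith) hD
    rw [gFun, lt_div_iff₀ hB]
    nlinarith
end

section
/- Let R > 0, L > 0 and A > 0 satisfy A = πR² and L² > 4πA. Set R̃ := L/(2π), y := √(1 − 4πA/L²) ∈ (0,1) and r̃ := y·R̃. Then the algebraic identity (π/2)·( r̃⁴·log(r̃/R̃) − (3/4)·r̃⁴ + R̃²·r̃² − R̃⁴/4 ) + A²/(8π) = (π R⁴ / (4(1−y²)²)) · y² · (1 + y²·log y² − y²) holds. -/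
open Real

theorem payne_weinberger_bound_identity
    (R L A : ℝ) (hR : 0 < R) (hL : 0 < L) (hA : 0 < A)
    (hAR : A = π * R ^ 2) (hiso : 4 * π * A < L ^ 2)
    (R' y r' : ℝ) (hR' : R' = L / (2 * π))
    (hy : y = Real.sqrt (1 - 4 * π * A / L ^ 2)) (hr' : r' = y * R') :
    y ∈ Set.Ioo (0 : ℝ) 1 ∧
    (π / 2) * (r' ^ 4 * Real.log (r' / R') - (3 / 4) * r' ^ 4 + R' ^ 2 * r' ^ 2 - R' ^ 4 / 4) +
        A ^ 2 / (8 * π) =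
      (π * R ^ 4 / (4 * (1 - y ^ 2) ^ 2)) * y ^ 2 *
        (1 + y ^ 2 * Real.log (y ^ 2) - y ^ 2) := by
  have hπ : 0 < π := Real.pi_pos
  have hL2 : (0:ℝ) < L ^ 2 := by positivity
  have ht0 : 0 < 1 - 4 * π * A / L ^ 2 := by
    have : 4 * π * A / L ^ 2 < 1 := by
      rw [div_lt_one hL2]; exact hiso
    linarith
  have ht1 : 1 - 4 * π * A / L ^ 2 < 1 := by
    have : 0 < 4 * π * A / L ^ 2 := by positivity
    linarith
  have hy0 : 0 < y := by rw [hy]; exact Real.sqrt_pos.mpr ht0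
  have hy1 : y < 1 := by
    rw [hy]
    calc Real.sqrt (1 - 4 * π * A / L ^ 2) < Real.sqrt 1 :=
      Real.sqrt_lt_sqrt ht0.le ht1
    _ = 1 := Real.sqrt_one
  refine ⟨⟨hy0, hy1⟩, ?_⟩
  have hy2 : y ^ 2 = 1 - 4 * π * A / L ^ 2 := by
    rw [hy]; exact Real.sq_sqrt ht0.le
  have hR'pos : 0 < R' := by rw [hR']; positivity
  have hlog1 : Real.log (r' / R') = Real.log y := by
    rw [hr', mul_div_assoc, div_self hR'pos.ne', mul_one]
  have hlog2 : Real.log (y ^ 2) = 2 * Real.log y := by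
    rw [Real.log_pow]; push_cast; ring
  have h1y2 : 1 - y ^ 2 = 4 * π * A / L ^ 2 := by rw [hy2]; ring
  have hR2 : R ^ 2 = R' ^ 2 * (1 - y ^ 2) := by
    rw [h1y2, hR']
    have : R ^ 2 = A / π := by rw [hAR]; field_simp
    rw [this]
    field_simp
    ring
  have hne : (1 - y ^ 2) ≠ 0 := by nlinarith
  have hR4 : R ^ 4 = (R' ^ 2 * (1 - y ^ 2)) ^ 2 := by
    rw [← hR2]; ring
  rw [hlog1, hlog2, hr', hR4, hAR, hR2]
  field_simp
  ring
end
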